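/- arXiv:2304.09531 — 2 statements merged into one kernel-verified Lean document; each statement's English description precedes it below -/
import Mathlib

section
/- For real numbers a, b, f, σ with a² < 1, b > 0, f ≠ 0, σ > 0, the quantity σ² + f²γ_* equals (f²b² + σ²(1+a²))/2 + (1/2)·√((σ²(1−a²) − f²b²)² + 4f²b²σ²), and the stability coefficient A = aσ²/(σ² + f²γ_*) satisfies |A| ≤ 2|a|/(1+a²) < 1. -/
noncomputable section

namespace HiddenAR

/-- The stationary filtering error variance
`γ_* = (f²b² − σ²(1−a²))/(2f²) + (1/(2f²))·√((σ²(1−a²) − f²b²)² + 4f²b²σ²)`. -/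
def gammaStar (a f σ b : ℝ) : ℝ :=
  (f ^ 2 * b ^ 2 - σ ^ 2 * (1 - a ^ 2)) / (2 * f ^ 2)
    + (1 / (2 * f ^ 2)) *
      Real.sqrt ((σ ^ 2 * (1 - a ^ 2) - f ^ 2 * b ^ 2) ^ 2 + 4 * f ^ 2 * b ^ 2 * σ ^ 2)

/-- `σ² + f²γ_* = (f²b² + σ²(1+a²))/2 + (1/2)·√((σ²(1−a²) − f²b²)² + 4f²b²σ²)`
and the stability coefficient `A = aσ²/(σ² + f²γ_*)` satisfies `|A| ≤ 2|a|/(1+a²) < 1`. -/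
theorem innovation_variance_and_stability (a b f σ : ℝ)
    (ha : a ^ 2 < 1) (hb : 0 < b) (hf : f ≠ 0) (hσ : 0 < σ) :
    σ ^ 2 + f ^ 2 * gammaStar a f σ b =
      (f ^ 2 * b ^ 2 + σ ^ 2 * (1 + a ^ 2)) / 2
        + (1 / 2) *
          Real.sqrt ((σ ^ 2 * (1 - a ^ 2) - f ^ 2 * b ^ 2) ^ 2 + 4 * f ^ 2 * b ^ 2 * σ ^ 2) ∧
    |a * σ ^ 2 / (σ ^ 2 + f ^ 2 * gammaStar a f σ b)| ≤ 2 * |a| / (1 + a ^ 2) ∧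
    2 * |a| / (1 + a ^ 2) < 1 := by
  have hf2 : (0:ℝ) < f ^ 2 := by positivity
  set S := Real.sqrt ((σ ^ 2 * (1 - a ^ 2) - f ^ 2 * b ^ 2) ^ 2 + 4 * f ^ 2 * b ^ 2 * σ ^ 2)
    with hSdef
  have hSnn : 0 ≤ S := Real.sqrt_nonneg _
  have heq : σ ^ 2 + f ^ 2 * gammaStar a f σ b =
      (f ^ 2 * b ^ 2 + σ ^ 2 * (1 + a ^ 2)) / 2 + (1/2) * S := by
    unfold gammaStar
    rw [← hSdef]
    field_simp
    ring
  have habs : |a| < 1 := by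
    rw [abs_lt]; constructor <;> nlinarith
  have hlast : 2 * |a| / (1 + a ^ 2) < 1 := by
    rw [div_lt_one (by positivity)]
    nlinarith [sq_abs a, abs_nonneg a, mul_self_nonneg (1 - |a|)]
  refine ⟨heq, ?_, hlast⟩
  have hD : σ ^ 2 * (1 + a ^ 2) / 2 ≤ σ ^ 2 + f ^ 2 * gammaStar a f σ b := by
    rw [heq]
    nlinarith [mul_pos hf2 (by positivity : (0:ℝ) < b ^ 2)]
  have hDpos : 0 < σ ^ 2 + f ^ 2 * gammaStar a f σ b := by
    nlinarith [sq_nonneg a, sq_nonneg σ, hσ.le]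
  rw [abs_div, abs_mul, abs_of_pos hDpos, abs_of_pos (by positivity : (0:ℝ) < σ ^ 2)]
  rw [div_le_div_iff₀ hDpos (by positivity)]
  nlinarith [abs_nonneg a, hD, mul_le_mul_of_nonneg_left hD (abs_nonneg a)]

end HiddenAR
end
end

section
/- The pair of parameters (f, b) is not identifiable: if f₁·b₁ = f₂·b₂ (with f₁, f₂ ≠ 0 and b₁, b₂ > 0), then for every n ≥ 1 the law of the observation vector (X_1^{(1)}, …, X_n^{(1)}) under parameters (f₁, b₁) coincides with the law of (X_1^{(2)}, …, X_n^{(2)}) under parameters (f₂, b₂); consequently no consistent estimator of the pair (f, b) exists. -/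
open MeasureTheory ProbabilityTheory Filter

noncomputable section

namespace HiddenAR

variable {Ω : Type*} [MeasurableSpace Ω]

/-- The combined noise path `(w_{t+1})_{t≥0}, (v_{t+1})_{t≥0}` as a single random element. -/
def noisePath (w v : ℕ → Ω → ℝ) : Ω → ((ℕ ⊕ ℕ) → ℝ) :=
  fun ω => Sum.elim (fun t => w (t + 1) ω) (fun t => v (t + 1) ω)

/-- Partially observed Gaussian linear system with stationary hidden AR process:
`X_t = f·Y_{t−1} + σ·w_t`, `Y_t = a·Y_{t−1} + b·v_t`, with `(w_t)_{t≥1}`, `(v_t)_{t≥1}`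
mutually independent i.i.d. standard Gaussian sequences independent of `(X_0, Y_0)`,
`a² < 1`, `b > 0`, `f ≠ 0`, `σ > 0`, stationary `Y_0 ~ N(0, b²/(1−a²))`,
square-integrable `X_0`. -/
structure System (μ : Measure Ω) (X Y w v : ℕ → Ω → ℝ) (a b f σ : ℝ) : Prop where
  isProb : IsProbabilityMeasure μ
  ha : a ^ 2 < 1
  hb : 0 < b
  hf : f ≠ 0
  hσ : 0 < σ
  measX : ∀ t, Measurable (X t)
  measY : ∀ t, Measurable (Y t)
  measw : ∀ t, Measurable (w t)
  measv : ∀ t, Measurable (v t)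
  hX : ∀ t, 1 ≤ t → ∀ ω, X t ω = f * Y (t - 1) ω + σ * w t ω
  hY : ∀ t, 1 ≤ t → ∀ ω, Y t ω = a * Y (t - 1) ω + b * v t ω
  indepNoise : iIndepFun
    (Sum.elim (fun t => w (t + 1)) (fun t => v (t + 1))) μ
  indepInit : IndepFun (fun ω => (X 0 ω, Y 0 ω)) (noisePath w v) μ
  law_w : ∀ t, 1 ≤ t → μ.map (w t) = gaussianReal 0 1
  law_v : ∀ t, 1 ≤ t → μ.map (v t) = gaussianReal 0 1
  law_Y0 : μ.map (Y 0) = gaussianReal 0 (Real.toNNReal (b ^ 2 / (1 - a ^ 2)))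
  sqInt_X0 : MemLp (X 0) 2 μ

end HiddenAR

/-!
Put `Z_t = f·Y_t`. Then `Z_{t+1} = a Z_t + (f b) v_{t+1}`, `Z_0 ~ N(0, (f b)² / (1 - a²))` is
independent of the noise, and `X_{t+1} = Z_t + σ w_{t+1}`. So `(X_1, …, X_n)` is a fixed
measurable function of `Z_0` and the noise, and its law depends on `(a, σ, f b)` only.

For the estimator: replacing `Y` by `2Y` turns a system with parameters `(f, b)` into one with
parameters `(f / 2, 2b)` on the same space and with the same observations, so a consistent
estimator would converge in probability to both pairs. The system is first copied to a canonical
space in `Type`, the universe over which consistency is quantified.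
-/

section IndepMap

variable {Ω Ω' : Type*} [MeasurableSpace Ω] [MeasurableSpace Ω'] {μ : Measure Ω}
  [IsProbabilityMeasure μ] {E : Ω → Ω'}

lemma iIndepFun_map_of_comp {ι : Type*} {β : ι → Type*} [∀ i, MeasurableSpace (β i)]
    {g : ∀ i, Ω' → β i} (hE : Measurable E)
    (hg : ∀ i, Measurable (g i)) (h : iIndepFun (fun i => g i ∘ E) μ) :
    iIndepFun g (μ.map E) := by
  have := Measure.isProbabilityMeasure_map (μ := μ) hE.aemeasurable
  rw [iIndepFun_iff_map_fun_eq_infinitePi_map hg, Measure.map_map (measurable_pi_lambda _ hg) hE]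
  simp_rw [Measure.map_map (hg _) hE]
  exact h.map_fun_eq_infinitePi_map fun i => (hg i).comp hE

lemma indepFun_map_of_comp {α β : Type*} [MeasurableSpace α] [MeasurableSpace β]
    {g : Ω' → α} {h : Ω' → β} (hE : Measurable E) (hg : Measurable g) (hh : Measurable h)
    (hgh : IndepFun (g ∘ E) (h ∘ E) μ) :
    IndepFun g h (μ.map E) := by
  rw [indepFun_iff_map_prod_eq_prod_map_map hg.aemeasurable hh.aemeasurable,
    Measure.map_map (hg.prodMk hh) hE, Measure.map_map hg hE, Measure.map_map hh hE]
  exact (indepFun_iff_map_prod_eq_prod_map_map (hg.comp hE).aemeasurable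
    (hh.comp hE).aemeasurable).1 hgh

end IndepMap

lemma tendstoInMeasure_const_unique {Ω ι α : Type*} [MeasurableSpace Ω] [MetricSpace α]
    {μ : Measure Ω} [NeZero μ]
    {l : Filter ι} [l.NeBot] [l.IsCountablyGenerated] {Z : ι → Ω → α} {p q : α}
    (hp : TendstoInMeasure μ Z l fun _ => p) (hq : TendstoInMeasure μ Z l fun _ => q) : p = q :=
  (tendstoInMeasure_ae_unique hp hq).exists.choose_spec

namespace HiddenAR

variable {Ω : Type*} [MeasurableSpace Ω]

def arPath (a c z : ℝ) (u : ℕ → ℝ) : ℕ → ℝ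
  | 0 => z
  | t + 1 => a * arPath a c z u t + c * u t

lemma measurable_arPath (a c : ℝ) (t : ℕ) :
    Measurable fun p : ℝ × (ℕ → ℝ) => arPath a c p.1 p.2 t := by
  induction t with
  | zero => exact measurable_fst
  | succ t ih => exact (ih.const_mul a).add (by fun_prop)

def obsMap (a σ c : ℝ) (n : ℕ) (p : ℝ × ((ℕ ⊕ ℕ) → ℝ)) : Fin n → ℝ :=
  fun i => arPath a c p.1 (fun t => p.2 (.inr t)) i + σ * p.2 (.inl i)

lemma measurable_obsMap (a σ c : ℝ) (n : ℕ) : Measurable (obsMap a σ c n) := by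
  refine measurable_pi_lambda _ fun i => Measurable.add ?_ (by fun_prop)
  exact (measurable_arPath a c i).comp
    (f := fun p : ℝ × ((ℕ ⊕ ℕ) → ℝ) => (p.1, fun t => p.2 (.inr t))) (by fun_prop)

lemma measurable_noisePath {w v : ℕ → Ω → ℝ} (hw : ∀ t, Measurable (w t))
    (hv : ∀ t, Measurable (v t)) : Measurable (noisePath w v) := by
  refine measurable_pi_lambda _ fun k => ?_
  cases k
  exacts [hw _, hv _]

namespace System

variable {μ : Measure Ω} {X Y w v : ℕ → Ω → ℝ} {a b f σ : ℝ}

lemma map_const_mul_Y_zero (hs : System μ X Y w v a b f σ) (c : ℝ) :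
    μ.map (fun ω => c * Y 0 ω) =
      gaussianReal 0 (Real.toNNReal ((c * b) ^ 2 / (1 - a ^ 2))) := by
  have h1a : 0 < 1 - a ^ 2 := by linarith [hs.ha]
  rw [show (fun ω => c * Y 0 ω) = (c * ·) ∘ Y 0 from rfl,
    ← Measure.map_map (measurable_const_mul c) (hs.measY 0), hs.law_Y0,
    gaussianReal_map_const_mul, mul_zero]
  congr 1
  apply NNReal.coe_injective
  rw [NNReal.coe_mul, NNReal.coe_mk, Real.coe_toNNReal _ (by positivity),
    Real.coe_toNNReal _ (by positivity)]
  ring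

lemma mul_Y_eq_arPath (hs : System μ X Y w v a b f σ) (ω : Ω) (t : ℕ) :
    f * Y t ω = arPath a (f * b) (f * Y 0 ω) (fun s => v (s + 1) ω) t := by
  induction t with
  | zero => rfl
  | succ t ih => rw [arPath, ← ih, hs.hY (t + 1) t.succ_pos ω, Nat.add_sub_cancel]; ring

lemma obs_eq_obsMap (hs : System μ X Y w v a b f σ) (n : ℕ) (ω : Ω) :
    (fun i : Fin n => X (i + 1) ω) = obsMap a σ (f * b) n (f * Y 0 ω, noisePath w v ω) := by
  funext i
  rw [hs.hX _ (Nat.le_add_left 1 _) ω, Nat.add_sub_cancel, hs.mul_Y_eq_arPath]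
  rfl

lemma map_noisePath (hs : System μ X Y w v a b f σ) :
    μ.map (noisePath w v) = Measure.infinitePi fun _ => gaussianReal 0 1 := by
  have hmeas : ∀ k, Measurable (Sum.elim (fun t => w (t + 1)) (fun t => v (t + 1)) k) := by
    rintro (t | t)
    exacts [hs.measw _, hs.measv _]
  have hnoise :
      noisePath w v = fun ω k => Sum.elim (fun t => w (t + 1)) (fun t => v (t + 1)) k ω := by
    funext ω k
    cases k <;> rfl
  rw [hnoise, hs.indepNoise.map_fun_eq_infinitePi_map hmeas]
  congr 1
  funext k
  cases k with
  | inl t => exact hs.law_w _ t.succ_pos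
  | inr t => exact hs.law_v _ t.succ_pos

theorem map_obs (hs : System μ X Y w v a b f σ) (n : ℕ) :
    μ.map (fun ω => fun i : Fin n => X (i + 1) ω) =
      ((gaussianReal 0 (Real.toNNReal ((f * b) ^ 2 / (1 - a ^ 2)))).prod
        (Measure.infinitePi fun _ : ℕ ⊕ ℕ => gaussianReal 0 1)).map
        (obsMap a σ (f * b) n) := by
  have := hs.isProb
  have hfY : Measurable fun ω => f * Y 0 ω := (hs.measY 0).const_mul f
  have hN : Measurable (noisePath w v) := measurable_noisePath hs.measw hs.measv
  have hindep : IndepFun (fun ω => f * Y 0 ω) (noisePath w v) μ :=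
    hs.indepInit.comp (φ := fun q : ℝ × ℝ => f * q.2) (ψ := id)
      (measurable_snd.const_mul f) measurable_id
  rw [funext (hs.obs_eq_obsMap n), ← Function.comp_def (obsMap a σ (f * b) n),
    ← Measure.map_map (measurable_obsMap _ _ _ n) (hfY.prodMk hN),
    (indepFun_iff_map_prod_eq_prod_map_map hfY.aemeasurable hN.aemeasurable).1 hindep,
    hs.map_const_mul_Y_zero, hs.map_noisePath]

lemma const_mul_Y (hs : System μ X Y w v a b f σ) {c : ℝ} (hc : 0 < c) :
    System μ X (fun t ω => c * Y t ω) w v a (c * b) (f / c) σ := by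
  refine ⟨hs.isProb, hs.ha, mul_pos hc hs.hb, div_ne_zero hs.hf hc.ne', hs.hσ, hs.measX,
    fun t => (hs.measY t).const_mul c, hs.measw, hs.measv, fun t ht ω => ?_, fun t ht ω => ?_,
    hs.indepNoise, ?_, hs.law_w, hs.law_v, hs.map_const_mul_Y_zero c, hs.sqInt_X0⟩
  · rw [hs.hX t ht ω]
    field_simp
  · rw [hs.hY t ht ω]
    ring
  · exact hs.indepInit.comp (φ := fun q : ℝ × ℝ => (q.1, c * q.2)) (ψ := id) (by fun_prop)
      measurable_id

end System

/-- Coordinates `(X₀, Y₀, w, v)`. -/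
abbrev CanonicalSpace : Type := ℝ × ℝ × (ℕ → ℝ) × (ℕ → ℝ)

def canonicalEmbedding (X Y w v : ℕ → Ω → ℝ) (ω : Ω) : CanonicalSpace :=
  (X 0 ω, Y 0 ω, fun t => w t ω, fun t => v t ω)

def canonicalY (a b : ℝ) (t : ℕ) (p : CanonicalSpace) : ℝ :=
  arPath a b p.2.1 (fun s => p.2.2.2 (s + 1)) t

def canonicalX (a b f σ : ℝ) : ℕ → CanonicalSpace → ℝ
  | 0 => fun p => p.1
  | t + 1 => fun p => f * canonicalY a b t p + σ * p.2.2.1 (t + 1)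

namespace System

variable {μ : Measure Ω} {X Y w v : ℕ → Ω → ℝ} {a b f σ : ℝ}

theorem map_canonicalEmbedding (hs : System μ X Y w v a b f σ) :
    System (μ.map (canonicalEmbedding X Y w v)) (canonicalX a b f σ) (canonicalY a b)
      (fun t p => p.2.2.1 t) (fun t p => p.2.2.2 t) a b f σ := by
  have := hs.isProb
  have hE : Measurable (canonicalEmbedding X Y w v) :=
    (hs.measX 0).prodMk ((hs.measY 0).prodMk
      ((measurable_pi_lambda _ hs.measw).prodMk (measurable_pi_lambda _ hs.measv)))
  have hY : ∀ t, Measurable (canonicalY a b t) := fun t =>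
    (measurable_arPath a b t)
      |>.comp (f := fun p : CanonicalSpace => (p.2.1, fun s => p.2.2.2 (s + 1))) (by fun_prop)
  have hX : ∀ t, Measurable (canonicalX a b f σ t) := by
    rintro (_ | t)
    exacts [measurable_fst, ((hY t).const_mul f).add (by fun_prop)]
  refine ⟨Measure.isProbabilityMeasure_map hE.aemeasurable, hs.ha, hs.hb, hs.hf, hs.hσ,
    hX, hY, fun t => by fun_prop, fun t => by fun_prop, ?_, ?_, ?_, ?_, ?_, ?_, ?_, ?_⟩
  · rintro (_ | t) ht p
    exacts [absurd ht (by omega), rfl]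
  · rintro (_ | t) ht p
    exacts [absurd ht (by omega), rfl]
  · refine iIndepFun_map_of_comp hE
      (by rintro (t | t) <;> simp only [Sum.elim_inl, Sum.elim_inr] <;> fun_prop) ?_
    convert hs.indepNoise using 1
    funext k
    cases k <;> rfl
  · exact indepFun_map_of_comp hE ((hX 0).prodMk (hY 0))
      (measurable_noisePath (by fun_prop) (by fun_prop)) hs.indepInit
  · intro t ht
    rw [Measure.map_map (by fun_prop) hE]
    exact hs.law_w t ht
  · intro t ht
    rw [Measure.map_map (by fun_prop) hE]
    exact hs.law_v t ht
  · rw [Measure.map_map (hY 0) hE]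
    exact hs.law_Y0
  · rw [memLp_map_measure_iff (hX 0).aestronglyMeasurable hE.aemeasurable]
    exact hs.sqInt_X0

end System

/-- the pair `(f, b)` is not identifiable. If `f₁·b₁ = f₂·b₂` then for every
`n ≥ 1` the law of `(X_1, …, X_n)` under `(f₁, b₁)` coincides with the law under
`(f₂, b₂)`; consequently no consistent estimator of the pair `(f, b)` exists. -/
theorem pair_f_b_not_identifiable
    {Ω₁ : Type*} [MeasurableSpace Ω₁] {Ω₂ : Type*} [MeasurableSpace Ω₂]
    (μ₁ : Measure Ω₁) (μ₂ : Measure Ω₂)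
    (X₁ Y₁ w₁ v₁ : ℕ → Ω₁ → ℝ) (X₂ Y₂ w₂ v₂ : ℕ → Ω₂ → ℝ)
    (a σ f₁ b₁ f₂ b₂ : ℝ)
    (hsys₁ : System μ₁ X₁ Y₁ w₁ v₁ a b₁ f₁ σ)
    (hsys₂ : System μ₂ X₂ Y₂ w₂ v₂ a b₂ f₂ σ)
    (hprod : f₁ * b₁ = f₂ * b₂) :
    (∀ n : ℕ, 1 ≤ n →
      μ₁.map (fun ω => fun i : Fin n => X₁ (i + 1) ω) =
        μ₂.map (fun ω => fun i : Fin n => X₂ (i + 1) ω)) ∧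
    ¬ ∃ est : (n : ℕ) → (Fin n → ℝ) → ℝ × ℝ,
        (∀ n, Measurable (est n)) ∧
        ∀ (Ω : Type) (_ : MeasurableSpace Ω) (μ : Measure Ω)
          (X Y w v : ℕ → Ω → ℝ) (f b : ℝ),
          System μ X Y w v a b f σ →
          ∀ ε : ℝ, 0 < ε →
            Tendsto (fun n : ℕ =>
                μ {ω | ε ≤ dist (est n (fun i : Fin n => X (i + 1) ω)) (f, b)})
              atTop (nhds 0) := by
  refine ⟨fun n _ => by rw [hsys₁.map_obs n, hsys₂.map_obs n, hprod], ?_⟩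
  rintro ⟨est, -, hcons⟩
  have hsys := hsys₁.map_canonicalEmbedding
  have := hsys.isProb
  have heq := tendstoInMeasure_const_unique
    (tendstoInMeasure_iff_dist.2 (hcons _ _ _ _ _ _ _ _ _ hsys))
    (tendstoInMeasure_iff_dist.2 (hcons _ _ _ _ _ _ _ _ _ (hsys.const_mul_Y two_pos)))
  linarith [congrArg Prod.snd heq, hsys₁.hb]

end HiddenAR
end
end
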